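/- arXiv:1302.1910 — 6 statements merged into one kernel-verified Lean document; each statement's English description precedes it below -/
import Mathlib

section
/- Suppose f and Θ are smooth, satisfy the constraint f(−Θ⁽³⁾(x)) + x·Θ⁽³⁾(x) − Θ''(x) = 0 for all x ∈ ℝ, that Θ⁽⁴⁾(x) ≠ 0 for all x ∈ ℝ, and that f satisfies the sixth-order ODE a₅[f](q) = 0 for all q ∈ ℝ. Then Θ satisfies the eighth-order ODE: for all x ∈ ℝ, 10·Θ⁽⁴⁾(x)³·Θ⁽⁸⁾(x) − 70·Θ⁽⁴⁾(x)²·Θ⁽⁵⁾(x)·Θ⁽⁷⁾(x) − 49·Θ⁽⁴⁾(x)²·Θ⁽⁶⁾(x)² + 280·Θ⁽⁴⁾(x)·Θ⁽⁵⁾(x)²·Θ⁽⁶⁾(x) − 175·Θ⁽⁵⁾(x)⁴ = 0. -/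
/-- The sixth-order ODE expression `a₅[f](q)` for a function `f : ℝ → ℝ`. -/
noncomputable def a5 (f : ℝ → ℝ) (q : ℝ) : ℝ :=
  10 * iteratedDeriv 6 f q * (iteratedDeriv 2 f q) ^ 3
    - 80 * (iteratedDeriv 2 f q) ^ 2 * iteratedDeriv 3 f q * iteratedDeriv 5 f q
    - 51 * (iteratedDeriv 2 f q) ^ 2 * (iteratedDeriv 4 f q) ^ 2
    + 336 * iteratedDeriv 2 f q * (iteratedDeriv 3 f q) ^ 2 * iteratedDeriv 4 f q
    - 224 * (iteratedDeriv 3 f q) ^ 4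

lemma derivZero {G g : ℝ → ℝ} (h : ∀ x, G x = 0) (hG : ∀ x, HasDerivAt G (g x) x) :
    ∀ x, g x = 0 := by
  intro x
  have h0 : G = fun _ => (0:ℝ) := funext h
  have hd := (hG x).deriv
  rw [h0] at hd
  simpa using hd.symm

lemma hasDerivAt_iteratedDeriv {F : ℝ → ℝ} (hF : ContDiff ℝ (⊤ : ℕ∞) F) (n : ℕ) (x : ℝ) :
    HasDerivAt (iteratedDeriv n F) (iteratedDeriv (n+1) F x) x := by
  have h1 : Differentiable ℝ (iteratedDeriv n F) := by
    rw [iteratedDeriv_eq_iterate]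
    exact (ContDiff.iterate_deriv n (hF.of_le (by simp))).differentiable (by simp)
  have := (h1 x).hasDerivAt
  rwa [← iteratedDeriv_succ] at this

theorem stmt_0 (f Θ : ℝ → ℝ) (hf : ContDiff ℝ (⊤ : ℕ∞) f) (hΘ : ContDiff ℝ (⊤ : ℕ∞) Θ)
    (hcon : ∀ x : ℝ, f (-(iteratedDeriv 3 Θ x)) + x * iteratedDeriv 3 Θ x
      - iteratedDeriv 2 Θ x = 0)
    (h4 : ∀ x : ℝ, iteratedDeriv 4 Θ x ≠ 0)
    (ha5 : ∀ q : ℝ, a5 f q = 0) :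
    ∀ x : ℝ,
      10 * (iteratedDeriv 4 Θ x) ^ 3 * iteratedDeriv 8 Θ x
        - 70 * (iteratedDeriv 4 Θ x) ^ 2 * iteratedDeriv 5 Θ x * iteratedDeriv 7 Θ x
        - 49 * (iteratedDeriv 4 Θ x) ^ 2 * (iteratedDeriv 6 Θ x) ^ 2
        + 280 * iteratedDeriv 4 Θ x * (iteratedDeriv 5 Θ x) ^ 2 * iteratedDeriv 6 Θ x
        - 175 * (iteratedDeriv 5 Θ x) ^ 4 = 0 := by
  have hTn : ∀ (n : ℕ) (x : ℝ), HasDerivAt (iteratedDeriv n Θ) (iteratedDeriv (n+1) Θ x) x :=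
    hasDerivAt_iteratedDeriv hΘ
  have hFn : ∀ (k : ℕ) (q : ℝ), HasDerivAt (iteratedDeriv k f) (iteratedDeriv (k+1) f q) q :=
    hasDerivAt_iteratedDeriv hf
  have hu : ∀ x : ℝ, HasDerivAt (fun y => -(iteratedDeriv 3 Θ y)) (-(iteratedDeriv 4 Θ x)) x :=
    fun x => (hTn 3 x).neg
  have hcomp : ∀ (k : ℕ) (x : ℝ),
      HasDerivAt (fun y => iteratedDeriv k f (-(iteratedDeriv 3 Θ y)))
        (iteratedDeriv (k+1) f (-(iteratedDeriv 3 Θ x)) * -(iteratedDeriv 4 Θ x)) x :=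
    fun k x => (hFn k _).comp x (hu x)
  -- Step 1 : f'(-(Θ³ x)) = x
  have raw1 := derivZero (G := fun y => f (-(iteratedDeriv 3 Θ y)) + y * iteratedDeriv 3 Θ y
      - iteratedDeriv 2 Θ y) hcon (fun x => by
    have h0 := hcomp 0 x
    rw [iteratedDeriv_zero] at h0
    exact (h0.add ((hasDerivAt_id x).mul (hTn 3 x))).sub (hTn 2 x))
  simp only [id_eq] at raw1
  have Z1 : ∀ x : ℝ, iteratedDeriv 1 f (-(iteratedDeriv 3 Θ x)) - x = 0 := by
    intro x
    have hmul : (iteratedDeriv 1 f (-(iteratedDeriv 3 Θ x)) - x) * -(iteratedDeriv 4 Θ x) = 0 := by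
      linear_combination raw1 x
    exact (mul_eq_zero.mp hmul).resolve_right (neg_ne_zero.2 (h4 x))
  -- Step 2
  have raw2 := derivZero (G := fun y => iteratedDeriv 1 f (-(iteratedDeriv 3 Θ y)) - y) Z1
    (fun x => (hcomp 1 x).sub (hasDerivAt_id x))
  have Z2 : ∀ x : ℝ, iteratedDeriv 2 f (-(iteratedDeriv 3 Θ x)) * iteratedDeriv 4 Θ x + 1 = 0 := by
    intro x; linear_combination -(raw2 x)
  -- Step 3
  have raw3 := derivZero
    (G := fun y => iteratedDeriv 2 f (-(iteratedDeriv 3 Θ y)) * iteratedDeriv 4 Θ y + 1) Z2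
    (fun x => ((hcomp 2 x).mul (hTn 4 x)).add_const 1)
  have Z3 : ∀ x : ℝ, iteratedDeriv 3 f (-(iteratedDeriv 3 Θ x)) * (iteratedDeriv 4 Θ x * iteratedDeriv 4 Θ x)
      - iteratedDeriv 2 f (-(iteratedDeriv 3 Θ x)) * iteratedDeriv 5 Θ x = 0 := by
    intro x; linear_combination -(raw3 x)
  -- Step 4
  have raw4 := derivZero
    (G := fun y => iteratedDeriv 3 f (-(iteratedDeriv 3 Θ y)) * (iteratedDeriv 4 Θ y * iteratedDeriv 4 Θ y)
      - iteratedDeriv 2 f (-(iteratedDeriv 3 Θ y)) * iteratedDeriv 5 Θ y) Z3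
    (fun x => ((hcomp 3 x).mul ((hTn 4 x).mul (hTn 4 x))).sub ((hcomp 2 x).mul (hTn 5 x)))
  have Z4 : ∀ x : ℝ, iteratedDeriv 4 f (-(iteratedDeriv 3 Θ x)) * (iteratedDeriv 4 Θ x * (iteratedDeriv 4 Θ x * iteratedDeriv 4 Θ x))
      - 3 * (iteratedDeriv 3 f (-(iteratedDeriv 3 Θ x)) * (iteratedDeriv 4 Θ x * iteratedDeriv 5 Θ x))
      + iteratedDeriv 2 f (-(iteratedDeriv 3 Θ x)) * iteratedDeriv 6 Θ x = 0 := by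
    intro x; have h := raw4 x; simp only [Pi.mul_apply] at h; linear_combination -h
  -- Step 5
  have raw5 := derivZero
    (G := fun y => iteratedDeriv 4 f (-(iteratedDeriv 3 Θ y)) * (iteratedDeriv 4 Θ y * (iteratedDeriv 4 Θ y * iteratedDeriv 4 Θ y))
      - 3 * (iteratedDeriv 3 f (-(iteratedDeriv 3 Θ y)) * (iteratedDeriv 4 Θ y * iteratedDeriv 5 Θ y))
      + iteratedDeriv 2 f (-(iteratedDeriv 3 Θ y)) * iteratedDeriv 6 Θ y) Z4
    (fun x => (((hcomp 4 x).mul ((hTn 4 x).mul ((hTn 4 x).mul (hTn 4 x)))).sub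
        (((hcomp 3 x).mul ((hTn 4 x).mul (hTn 5 x))).const_mul 3)).add
        ((hcomp 2 x).mul (hTn 6 x)))
  have Z5 : ∀ x : ℝ, iteratedDeriv 5 f (-(iteratedDeriv 3 Θ x)) * (iteratedDeriv 4 Θ x * (iteratedDeriv 4 Θ x * (iteratedDeriv 4 Θ x * iteratedDeriv 4 Θ x)))
      - 6 * (iteratedDeriv 4 f (-(iteratedDeriv 3 Θ x)) * ((iteratedDeriv 4 Θ x * iteratedDeriv 4 Θ x) * iteratedDeriv 5 Θ x))
      + 3 * (iteratedDeriv 3 f (-(iteratedDeriv 3 Θ x)) * (iteratedDeriv 5 Θ x * iteratedDeriv 5 Θ x))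
      + 4 * (iteratedDeriv 3 f (-(iteratedDeriv 3 Θ x)) * (iteratedDeriv 4 Θ x * iteratedDeriv 6 Θ x))
      - iteratedDeriv 2 f (-(iteratedDeriv 3 Θ x)) * iteratedDeriv 7 Θ x = 0 := by
    intro x; have h := raw5 x; simp only [Pi.mul_apply] at h; linear_combination -h
  -- Step 6
  have raw6 := derivZero
    (G := fun y => iteratedDeriv 5 f (-(iteratedDeriv 3 Θ y)) * (iteratedDeriv 4 Θ y * (iteratedDeriv 4 Θ y * (iteratedDeriv 4 Θ y * iteratedDeriv 4 Θ y)))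
      - 6 * (iteratedDeriv 4 f (-(iteratedDeriv 3 Θ y)) * ((iteratedDeriv 4 Θ y * iteratedDeriv 4 Θ y) * iteratedDeriv 5 Θ y))
      + 3 * (iteratedDeriv 3 f (-(iteratedDeriv 3 Θ y)) * (iteratedDeriv 5 Θ y * iteratedDeriv 5 Θ y))
      + 4 * (iteratedDeriv 3 f (-(iteratedDeriv 3 Θ y)) * (iteratedDeriv 4 Θ y * iteratedDeriv 6 Θ y))
      - iteratedDeriv 2 f (-(iteratedDeriv 3 Θ y)) * iteratedDeriv 7 Θ y) Z5
    (fun x => (((((hcomp 5 x).mul ((hTn 4 x).mul ((hTn 4 x).mul ((hTn 4 x).mul (hTn 4 x))))).sub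
        (((hcomp 4 x).mul (((hTn 4 x).mul (hTn 4 x)).mul (hTn 5 x))).const_mul 6)).add
        (((hcomp 3 x).mul ((hTn 5 x).mul (hTn 5 x))).const_mul 3)).add
        (((hcomp 3 x).mul ((hTn 4 x).mul (hTn 6 x))).const_mul 4)).sub
        ((hcomp 2 x).mul (hTn 7 x)))
  -- Final algebra
  intro x
  have key := ha5 (-(iteratedDeriv 3 Θ x))
  unfold a5 at key
  have H2x := Z2 x
  have H3x := Z3 x
  have H4x := Z4 x
  have H5x := Z5 x
  have H6x := raw6 x
  set c2 := iteratedDeriv 2 f (-(iteratedDeriv 3 Θ x)) with hc2def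
  set c3 := iteratedDeriv 3 f (-(iteratedDeriv 3 Θ x)) with hc3def
  set c4 := iteratedDeriv 4 f (-(iteratedDeriv 3 Θ x)) with hc4def
  set c5 := iteratedDeriv 5 f (-(iteratedDeriv 3 Θ x)) with hc5def
  set c6 := iteratedDeriv 6 f (-(iteratedDeriv 3 Θ x)) with hc6def
  set D := iteratedDeriv 4 Θ x with hDdef
  set E := iteratedDeriv 5 Θ x with hEdef
  set F6 := iteratedDeriv 6 Θ x with hF6def
  set F7 := iteratedDeriv 7 Θ x with hF7def
  set F8 := iteratedDeriv 8 Θ x with hF8def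
  have hK2 : c2 * D = -1 := by linear_combination H2x
  have hK3 : c3 * D^3 = -E := by linear_combination D * H3x + E * H2x
  have hK4 : c4 * D^5 = D*F6 - 3*E^2 := by
    linear_combination D^2 * H4x + 3*D*E * H3x + (3*E^2 - D*F6) * H2x
  have hK5 : c5 * D^7 = -(D^2*F7) + 10*D*E*F6 - 15*E^3 := by
    linear_combination D^3 * H5x + 6*D^2*E * H4x + (15*D*E^2 - 4*D^2*F6) * H3x
      + (15*E^3 - 10*D*E*F6 + D^2*F7) * H2x
  have hK6 : c6 * D^9 = D^3*F8 - 15*D^2*E*F7 - 10*D^2*F6^2 + 105*D*E^2*F6 - 105*E^4 := by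
    simp only [Pi.mul_apply, ← hDdef, ← hEdef, ← hF6def] at H6x
    linear_combination -(D^4 * H6x) + 10*D^3*E * H5x + (45*D^2*E^2 - 10*D^3*F6) * H4x
      + (105*D*E^3 - 60*D^2*E*F6 + 5*D^3*F7) * H3x
      + (105*E^4 - 105*D*E^2*F6 + 15*D^2*E*F7 + 10*D^2*F6^2 - D^3*F8) * H2x
  have step1 : 10 * (c6*D^9) * (c2*D)^3 - 80 * (c2*D)^2 * (c3*D^3) * (c5*D^7)
      - 51 * (c2*D)^2 * (c4*D^5)^2 + 336 * (c2*D) * (c3*D^3)^2 * (c4*D^5)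
      - 224 * (c3*D^3)^4
      = -(10 * D ^ 3 * F8 - 70 * D ^ 2 * E * F7 - 49 * D ^ 2 * F6 ^ 2
          + 280 * D * E ^ 2 * F6 - 175 * E ^ 4) := by
    rw [hK2, hK3, hK4, hK5, hK6]; ring
  linear_combination step1 - D^12 * key
end

section
/- Suppose f and Θ are smooth, satisfy the constraint f(−Θ⁽³⁾(x)) + x·Θ⁽³⁾(x) − Θ''(x) = 0 for all x ∈ ℝ, and that Θ⁽⁴⁾(x) ≠ 0 for all x ∈ ℝ. Then for all x ∈ ℝ, f''(−Θ⁽³⁾(x)) = −1/Θ⁽⁴⁾(x). -/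
theorem stmt_2 (f Θ : ℝ → ℝ) (hf : ContDiff ℝ (⊤ : ℕ∞) f) (hΘ : ContDiff ℝ (⊤ : ℕ∞) Θ)
    (hcon : ∀ x : ℝ, f (-(iteratedDeriv 3 Θ x)) + x * iteratedDeriv 3 Θ x
      - iteratedDeriv 2 Θ x = 0)
    (h4 : ∀ x : ℝ, iteratedDeriv 4 Θ x ≠ 0) :
    ∀ x : ℝ, iteratedDeriv 2 f (-(iteratedDeriv 3 Θ x)) = -1 / iteratedDeriv 4 Θ x := by
  have hfi : ContDiff ℝ ((⊤ : ℕ∞) : WithTop ℕ∞) f := hf.of_le (by simp)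
  have hΘi : ContDiff ℝ ((⊤ : ℕ∞) : WithTop ℕ∞) Θ := hΘ.of_le (by simp)
  have hfd : Differentiable ℝ f := hfi.differentiable (by simp)
  have hf'd : Differentiable ℝ (deriv f) :=
    ((contDiff_infty_iff_deriv.mp hfi).2).differentiable (by simp)
  -- derivatives of iterated derivatives of Θ
  have hTd : ∀ n : ℕ, ∀ y : ℝ,
      HasDerivAt (iteratedDeriv n Θ) (iteratedDeriv (n + 1) Θ y) y := by
    intro n y
    have h : ContDiff ℝ ((⊤ : ℕ∞) : WithTop ℕ∞) (iteratedDeriv n Θ) := by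
      rw [iteratedDeriv_eq_iterate]
      exact hΘi.iterate_deriv n
    have hd : DifferentiableAt ℝ (iteratedDeriv n Θ) y :=
      (h.differentiable (by simp)).differentiableAt
    simpa [iteratedDeriv_succ] using hd.hasDerivAt
  -- step 1 : deriv f (-(Θ³ y)) = y
  have key1 : ∀ y : ℝ, deriv f (-(iteratedDeriv 3 Θ y)) = y := by
    intro y
    have hA : HasDerivAt (fun z => f (-(iteratedDeriv 3 Θ z)))
        (deriv f (-(iteratedDeriv 3 Θ y)) * (-(iteratedDeriv 4 Θ y))) y :=
      ((hfd _).hasDerivAt).comp y ((hTd 3 y).neg)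
    have hB : HasDerivAt (fun z : ℝ => z * iteratedDeriv 3 Θ z)
        (1 * iteratedDeriv 3 Θ y + y * iteratedDeriv 4 Θ y) y :=
      (hasDerivAt_id y).mul (hTd 3 y)
    have hC : HasDerivAt (iteratedDeriv 2 Θ) (iteratedDeriv 3 Θ y) y := hTd 2 y
    have h1 := (hA.add hB).sub hC
    have h0 : (fun z : ℝ => f (-(iteratedDeriv 3 Θ z)) + z * iteratedDeriv 3 Θ z
        - iteratedDeriv 2 Θ z) = fun _ => (0 : ℝ) := funext hcon
    rw [show ((fun z => f (-iteratedDeriv 3 Θ z)) + fun z : ℝ => z * iteratedDeriv 3 Θ z) - iteratedDeriv 2 Θ = fun _ => (0 : ℝ) from h0] at h1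
    have := h1.unique (hasDerivAt_const y 0)
    have h4y := h4 y
    have : deriv f (-(iteratedDeriv 3 Θ y)) * iteratedDeriv 4 Θ y
        = y * iteratedDeriv 4 Θ y := by nlinarith [this]
    exact mul_right_cancel₀ h4y this
  -- step 2 : differentiate key1
  intro x
  have hA : HasDerivAt (fun z => deriv f (-(iteratedDeriv 3 Θ z)))
      (deriv (deriv f) (-(iteratedDeriv 3 Θ x)) * (-(iteratedDeriv 4 Θ x))) x :=
    ((hf'd _).hasDerivAt).comp x ((hTd 3 x).neg)
  have h1 := hA.sub (hasDerivAt_id x)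
  have h0 : (fun z : ℝ => deriv f (-(iteratedDeriv 3 Θ z)) - id z) = fun _ => (0 : ℝ) := by
    funext z; simp [key1 z]
  rw [show ((fun z => deriv f (-iteratedDeriv 3 Θ z)) - id) = fun _ => (0 : ℝ) from h0] at h1
  have hz := h1.unique (hasDerivAt_const x 0)
  have h2 : iteratedDeriv 2 f (-(iteratedDeriv 3 Θ x))
      = deriv (deriv f) (-(iteratedDeriv 3 Θ x)) := by
    simp [iteratedDeriv_succ, iteratedDeriv_one]
  rw [h2]
  have h4x := h4 x
  field_simp
  nlinarith [hz]
end

section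
/- Suppose f and Θ are smooth, satisfy the constraint f(−Θ⁽³⁾(x)) + x·Θ⁽³⁾(x) − Θ''(x) = 0 for all x ∈ ℝ, and that Θ⁽⁴⁾(x) ≠ 0 for all x ∈ ℝ. Then for all x ∈ ℝ, f⁽³⁾(−Θ⁽³⁾(x)) = −Θ⁽⁵⁾(x)/Θ⁽⁴⁾(x)³. -/
theorem stmt_3 (f Θ : ℝ → ℝ) (hf : ContDiff ℝ (⊤ : ℕ∞) f) (hΘ : ContDiff ℝ (⊤ : ℕ∞) Θ)
    (hcon : ∀ x : ℝ, f (-(iteratedDeriv 3 Θ x)) + x * iteratedDeriv 3 Θ x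
      - iteratedDeriv 2 Θ x = 0)
    (h4 : ∀ x : ℝ, iteratedDeriv 4 Θ x ≠ 0) :
    ∀ x : ℝ, iteratedDeriv 3 f (-(iteratedDeriv 3 Θ x)) =
      -(iteratedDeriv 5 Θ x) / (iteratedDeriv 4 Θ x) ^ 3 := by
  -- smoothness of iterated derivatives
  have hΘn : ∀ n : ℕ, ContDiff ℝ (⊤ : ℕ∞) (iteratedDeriv n Θ) := by
    intro n; rw [iteratedDeriv_eq_iterate]; exact (hΘ.of_le (by simp)).iterate_deriv n
  have hfn : ∀ n : ℕ, ContDiff ℝ (⊤ : ℕ∞) (iteratedDeriv n f) := by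
    intro n; rw [iteratedDeriv_eq_iterate]; exact (hf.of_le (by simp)).iterate_deriv n
  -- HasDerivAt for iterated derivatives
  have hΘd : ∀ (n : ℕ) (x : ℝ),
      HasDerivAt (iteratedDeriv n Θ) (iteratedDeriv (n+1) Θ x) x := by
    intro n x
    have h := ((hΘn n).differentiable (by simp) x).hasDerivAt
    rwa [show deriv (iteratedDeriv n Θ) x = iteratedDeriv (n+1) Θ x by
      rw [iteratedDeriv_succ]] at h
  have hfd : ∀ (n : ℕ) (y : ℝ),
      HasDerivAt (iteratedDeriv n f) (iteratedDeriv (n+1) f y) y := by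
    intro n y
    have h := ((hfn n).differentiable (by simp) y).hasDerivAt
    rwa [show deriv (iteratedDeriv n f) y = iteratedDeriv (n+1) f y by
      rw [iteratedDeriv_succ]] at h
  set u := iteratedDeriv 3 Θ with hu
  have hinner : ∀ x : ℝ, HasDerivAt (fun x => -(u x)) (-(iteratedDeriv 4 Θ x)) x :=
    fun x => (hΘd 3 x).neg
  -- step 1 : deriv f (-(u x)) = x
  have key1 : ∀ x : ℝ, iteratedDeriv 1 f (-(u x)) = x := by
    intro x
    have h1 : HasDerivAt (fun x => f (-(u x)))
        (iteratedDeriv 1 f (-(u x)) * (-(iteratedDeriv 4 Θ x))) x := by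
      have h := (hfd 0 (-(u x))).comp x (hinner x)
      simpa [iteratedDeriv_zero, Function.comp_def] using h
    have h2 : HasDerivAt (fun x : ℝ => x * u x)
        (1 * u x + x * iteratedDeriv 4 Θ x) x := (hasDerivAt_id x).mul (hΘd 3 x)
    have h3 : HasDerivAt (fun x => iteratedDeriv 2 Θ x) (u x) x := hΘd 2 x
    have H := (h1.add h2).sub h3
    have Heq : (fun x => f (-(u x)) + x * u x - iteratedDeriv 2 Θ x)
        = fun _ : ℝ => (0 : ℝ) := funext hcon
    have H0 : HasDerivAt (fun x => f (-(u x)) + x * u x - iteratedDeriv 2 Θ x) 0 x := by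
      rw [Heq]; exact hasDerivAt_const x 0
    have huniq := H.unique H0
    have h0 : (iteratedDeriv 1 f (-(u x)) - x) * iteratedDeriv 4 Θ x = 0 := by
      linear_combination -huniq
    rcases mul_eq_zero.mp h0 with h | h
    · exact sub_eq_zero.mp h
    · exact absurd h (h4 x)
  -- step 2 : iteratedDeriv 2 f (-(u x)) = -1 / Θ⁴ x
  have key2 : ∀ x : ℝ, iteratedDeriv 2 f (-(u x)) = -1 / iteratedDeriv 4 Θ x := by
    intro x
    have h1 : HasDerivAt (fun x => iteratedDeriv 1 f (-(u x)))
        (iteratedDeriv 2 f (-(u x)) * (-(iteratedDeriv 4 Θ x))) x := by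
      have h := (hfd 1 (-(u x))).comp x (hinner x)
      simpa [Function.comp_def] using h
    have Heq : (fun x => iteratedDeriv 1 f (-(u x))) = fun x : ℝ => x := funext key1
    have H0 : HasDerivAt (fun x => iteratedDeriv 1 f (-(u x))) 1 x := by
      rw [Heq]; exact hasDerivAt_id x
    have huniq := h1.unique H0
    rw [eq_div_iff (h4 x)]
    linear_combination -huniq
  -- step 3
  intro x
  have h1 : HasDerivAt (fun x => iteratedDeriv 2 f (-(u x)))
      (iteratedDeriv 3 f (-(u x)) * (-(iteratedDeriv 4 Θ x))) x := by
    have h := (hfd 2 (-(u x))).comp x (hinner x)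
    simpa [Function.comp_def] using h
  have h2 : HasDerivAt (fun x : ℝ => -1 / iteratedDeriv 4 Θ x)
      ((0 * iteratedDeriv 4 Θ x - (-1) * iteratedDeriv 5 Θ x)
        / (iteratedDeriv 4 Θ x) ^ 2) x :=
    (hasDerivAt_const x (-1)).div (hΘd 4 x) (h4 x)
  have Heq : (fun x => iteratedDeriv 2 f (-(u x)))
      = fun x : ℝ => -1 / iteratedDeriv 4 Θ x := funext key2
  have H0 : HasDerivAt (fun x => iteratedDeriv 2 f (-(u x)))
      ((0 * iteratedDeriv 4 Θ x - (-1) * iteratedDeriv 5 Θ x)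
        / (iteratedDeriv 4 Θ x) ^ 2) x := by rw [Heq]; exact h2
  have hEq := h1.unique H0
  rw [eq_div_iff (pow_ne_zero 2 (h4 x))] at hEq
  rw [eq_div_iff (pow_ne_zero 3 (h4 x))]
  linear_combination -hEq
end

section
/- Suppose f and Θ are smooth, satisfy the constraint f(−Θ⁽³⁾(x)) + x·Θ⁽³⁾(x) − Θ''(x) = 0 for all x ∈ ℝ, and that Θ⁽⁴⁾(x) ≠ 0 for all x ∈ ℝ. Then for all x ∈ ℝ, a₅[f](−Θ⁽³⁾(x)) = −α₅[Θ](x)/Θ⁽⁴⁾(x)¹², where a₅[f] is evaluated at the point q = −Θ⁽³⁾(x). -/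
/-- The eighth-order ODE expression `α₅[Θ](x)` for a function `Θ : ℝ → ℝ`. -/
noncomputable def α5 (Θ : ℝ → ℝ) (x : ℝ) : ℝ :=
  10 * (iteratedDeriv 4 Θ x) ^ 3 * iteratedDeriv 8 Θ x
    - 70 * (iteratedDeriv 4 Θ x) ^ 2 * iteratedDeriv 5 Θ x * iteratedDeriv 7 Θ x
    - 49 * (iteratedDeriv 4 Θ x) ^ 2 * (iteratedDeriv 6 Θ x) ^ 2
    + 280 * iteratedDeriv 4 Θ x * (iteratedDeriv 5 Θ x) ^ 2 * iteratedDeriv 6 Θ x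
    - 175 * (iteratedDeriv 5 Θ x) ^ 4

private lemma deriv_val_eq {g h : ℝ → ℝ} {d e : ℝ} {x : ℝ}
    (hgh : ∀ y, g y = h y) (hg : HasDerivAt g d x) (hh : HasDerivAt h e x) : d = e :=
  (hg.congr_of_eventuallyEq (Filter.Eventually.of_forall fun y => (hgh y).symm)).unique hh

theorem stmt_6 (f Θ : ℝ → ℝ) (hf : ContDiff ℝ (⊤ : ℕ∞) f) (hΘ : ContDiff ℝ (⊤ : ℕ∞) Θ)
    (hcon : ∀ x : ℝ, f (-(iteratedDeriv 3 Θ x)) + x * iteratedDeriv 3 Θ x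
      - iteratedDeriv 2 Θ x = 0)
    (h4 : ∀ x : ℝ, iteratedDeriv 4 Θ x ≠ 0) :
    ∀ x : ℝ, a5 f (-(iteratedDeriv 3 Θ x)) = -α5 Θ x / (iteratedDeriv 4 Θ x) ^ 12 := by
  have hyd : ∀ (k : ℕ) (x : ℝ), HasDerivAt (iteratedDeriv k Θ) (iteratedDeriv (k+1) Θ x) x := by
    intro k x
    rw [iteratedDeriv_succ]
    exact ((hΘ.differentiable_iteratedDeriv k (by exact_mod_cast ENat.natCast_lt_top k)) x).hasDerivAt
  have hfd : ∀ (k : ℕ) (q : ℝ), HasDerivAt (iteratedDeriv k f) (iteratedDeriv (k+1) f q) q := by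
    intro k q
    rw [iteratedDeriv_succ]
    exact ((hf.differentiable_iteratedDeriv k (by exact_mod_cast ENat.natCast_lt_top k)) q).hasDerivAt
  have hF : ∀ (k : ℕ) (x : ℝ), HasDerivAt (fun x => iteratedDeriv k f (-(iteratedDeriv 3 Θ x)))
      (iteratedDeriv (k+1) f (-(iteratedDeriv 3 Θ x)) * -(iteratedDeriv 4 Θ x)) x := by
    intro k x
    exact (hfd k (-(iteratedDeriv 3 Θ x))).comp x ((hyd 3 x).neg)
  -- Step 0
  have E0 : ∀ y : ℝ, iteratedDeriv 0 f (-(iteratedDeriv 3 Θ y))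
      = iteratedDeriv 2 Θ y - y * iteratedDeriv 3 Θ y := by
    intro y
    rw [iteratedDeriv_zero]
    linarith [hcon y]
  -- Step 1 : f'(u x) = x
  have E1 : ∀ x : ℝ, iteratedDeriv 1 f (-(iteratedDeriv 3 Θ x)) = x := by
    intro x
    have hR : HasDerivAt (fun y => iteratedDeriv 2 Θ y - y * iteratedDeriv 3 Θ y)
        (iteratedDeriv 3 Θ x - (1 * iteratedDeriv 3 Θ x + x * iteratedDeriv 4 Θ x)) x :=
      (hyd 2 x).sub ((hasDerivAt_id x).mul (hyd 3 x))
    have key := deriv_val_eq E0 (hF 0 x) hR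
    have h4x := h4 x
    have : iteratedDeriv 4 Θ x * iteratedDeriv 1 f (-(iteratedDeriv 3 Θ x))
        = iteratedDeriv 4 Θ x * x := by linear_combination -key
    exact mul_left_cancel₀ h4x this
  -- Step 2 : y4 * f''(u) = -1
  have E2 : ∀ x : ℝ, iteratedDeriv 4 Θ x * iteratedDeriv 2 f (-(iteratedDeriv 3 Θ x)) = -1 := by
    intro x
    have key := deriv_val_eq E1 (hF 1 x) (hasDerivAt_id x)
    linear_combination -key
  -- Step 3 : y4^3 * f'''(u) = -y5
  have E3 : ∀ x : ℝ, (iteratedDeriv 4 Θ x)^3 * iteratedDeriv 3 f (-(iteratedDeriv 3 Θ x))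
      = -(iteratedDeriv 5 Θ x) := by
    intro x
    have hL : HasDerivAt (fun x => iteratedDeriv 4 Θ x * iteratedDeriv 2 f (-(iteratedDeriv 3 Θ x)))
        (iteratedDeriv 5 Θ x * iteratedDeriv 2 f (-(iteratedDeriv 3 Θ x))
          + iteratedDeriv 4 Θ x * (iteratedDeriv 3 f (-(iteratedDeriv 3 Θ x)) * -(iteratedDeriv 4 Θ x))) x :=
      (hyd 4 x).mul (hF 2 x)
    have key := deriv_val_eq E2 hL (hasDerivAt_const x (-1))
    linear_combination (iteratedDeriv 5 Θ x) * (E2 x) - (iteratedDeriv 4 Θ x) * key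
  -- Step 4 : y4^5 * f⁗(u) = y4*y6 - 3*y5^2
  have E4 : ∀ x : ℝ, (iteratedDeriv 4 Θ x)^5 * iteratedDeriv 4 f (-(iteratedDeriv 3 Θ x))
      = iteratedDeriv 4 Θ x * iteratedDeriv 6 Θ x - 3 * (iteratedDeriv 5 Θ x)^2 := by
    intro x
    have hL : HasDerivAt (fun x => (iteratedDeriv 4 Θ x)^3 * iteratedDeriv 3 f (-(iteratedDeriv 3 Θ x)))
        ((3 : ℝ) * (iteratedDeriv 4 Θ x)^(3-1) * iteratedDeriv 5 Θ x * iteratedDeriv 3 f (-(iteratedDeriv 3 Θ x))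
          + (iteratedDeriv 4 Θ x)^3 * (iteratedDeriv 4 f (-(iteratedDeriv 3 Θ x)) * -(iteratedDeriv 4 Θ x))) x :=
      ((hyd 4 x).pow 3).mul (hF 3 x)
    have hR : HasDerivAt (fun x => -(iteratedDeriv 5 Θ x)) (-(iteratedDeriv 6 Θ x)) x := (hyd 5 x).neg
    have key := deriv_val_eq E3 hL hR
    linear_combination 3 * (iteratedDeriv 5 Θ x) * (E3 x) - (iteratedDeriv 4 Θ x) * key
  -- Step 5
  have E5 : ∀ x : ℝ, (iteratedDeriv 4 Θ x)^7 * iteratedDeriv 5 f (-(iteratedDeriv 3 Θ x))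
      = -((iteratedDeriv 4 Θ x)^2 * iteratedDeriv 7 Θ x)
        + 10 * iteratedDeriv 4 Θ x * iteratedDeriv 5 Θ x * iteratedDeriv 6 Θ x
        - 15 * (iteratedDeriv 5 Θ x)^3 := by
    intro x
    have hL : HasDerivAt (fun x => (iteratedDeriv 4 Θ x)^5 * iteratedDeriv 4 f (-(iteratedDeriv 3 Θ x)))
        ((5 : ℝ) * (iteratedDeriv 4 Θ x)^(5-1) * iteratedDeriv 5 Θ x * iteratedDeriv 4 f (-(iteratedDeriv 3 Θ x))
          + (iteratedDeriv 4 Θ x)^5 * (iteratedDeriv 5 f (-(iteratedDeriv 3 Θ x)) * -(iteratedDeriv 4 Θ x))) x :=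
      ((hyd 4 x).pow 5).mul (hF 4 x)
    have hR : HasDerivAt (fun x => iteratedDeriv 4 Θ x * iteratedDeriv 6 Θ x - 3 * (iteratedDeriv 5 Θ x)^2)
        ((iteratedDeriv 5 Θ x * iteratedDeriv 6 Θ x + iteratedDeriv 4 Θ x * iteratedDeriv 7 Θ x)
          - 3 * ((2 : ℝ) * (iteratedDeriv 5 Θ x)^(2-1) * iteratedDeriv 6 Θ x)) x :=
      ((hyd 4 x).mul (hyd 6 x)).sub (((hyd 5 x).pow 2).const_mul 3)
    have key := deriv_val_eq E4 hL hR
    linear_combination 5 * (iteratedDeriv 5 Θ x) * (E4 x) - (iteratedDeriv 4 Θ x) * key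
  -- Step 6
  have E6 : ∀ x : ℝ, (iteratedDeriv 4 Θ x)^9 * iteratedDeriv 6 f (-(iteratedDeriv 3 Θ x))
      = (iteratedDeriv 4 Θ x)^3 * iteratedDeriv 8 Θ x
        - 15 * (iteratedDeriv 4 Θ x)^2 * iteratedDeriv 5 Θ x * iteratedDeriv 7 Θ x
        - 10 * (iteratedDeriv 4 Θ x)^2 * (iteratedDeriv 6 Θ x)^2
        + 105 * iteratedDeriv 4 Θ x * (iteratedDeriv 5 Θ x)^2 * iteratedDeriv 6 Θ x
        - 105 * (iteratedDeriv 5 Θ x)^4 := by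
    intro x
    have hL : HasDerivAt (fun x => (iteratedDeriv 4 Θ x)^7 * iteratedDeriv 5 f (-(iteratedDeriv 3 Θ x)))
        ((7 : ℝ) * (iteratedDeriv 4 Θ x)^(7-1) * iteratedDeriv 5 Θ x * iteratedDeriv 5 f (-(iteratedDeriv 3 Θ x))
          + (iteratedDeriv 4 Θ x)^7 * (iteratedDeriv 6 f (-(iteratedDeriv 3 Θ x)) * -(iteratedDeriv 4 Θ x))) x :=
      ((hyd 4 x).pow 7).mul (hF 5 x)
    have h1 : HasDerivAt (fun x => (iteratedDeriv 4 Θ x)^2 * iteratedDeriv 7 Θ x)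
        ((2 : ℝ) * (iteratedDeriv 4 Θ x)^(2-1) * iteratedDeriv 5 Θ x * iteratedDeriv 7 Θ x
          + (iteratedDeriv 4 Θ x)^2 * iteratedDeriv 8 Θ x) x :=
      ((hyd 4 x).pow 2).mul (hyd 7 x)
    have h2 : HasDerivAt (fun x => iteratedDeriv 4 Θ x * iteratedDeriv 5 Θ x * iteratedDeriv 6 Θ x)
        ((iteratedDeriv 5 Θ x * iteratedDeriv 5 Θ x + iteratedDeriv 4 Θ x * iteratedDeriv 6 Θ x) * iteratedDeriv 6 Θ x
          + iteratedDeriv 4 Θ x * iteratedDeriv 5 Θ x * iteratedDeriv 7 Θ x) x :=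
      (((hyd 4 x).mul (hyd 5 x)).mul (hyd 6 x))
    have h3 : HasDerivAt (fun x => (iteratedDeriv 5 Θ x)^3)
        ((3 : ℝ) * (iteratedDeriv 5 Θ x)^(3-1) * iteratedDeriv 6 Θ x) x := (hyd 5 x).pow 3
    have hR : HasDerivAt (fun y => -((iteratedDeriv 4 Θ y)^2 * iteratedDeriv 7 Θ y)
          + 10 * iteratedDeriv 4 Θ y * iteratedDeriv 5 Θ y * iteratedDeriv 6 Θ y
          - 15 * (iteratedDeriv 5 Θ y)^3)
        (-((2 : ℝ) * (iteratedDeriv 4 Θ x)^(2-1) * iteratedDeriv 5 Θ x * iteratedDeriv 7 Θ x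
            + (iteratedDeriv 4 Θ x)^2 * iteratedDeriv 8 Θ x)
          + 10 * ((iteratedDeriv 5 Θ x * iteratedDeriv 5 Θ x + iteratedDeriv 4 Θ x * iteratedDeriv 6 Θ x) * iteratedDeriv 6 Θ x
            + iteratedDeriv 4 Θ x * iteratedDeriv 5 Θ x * iteratedDeriv 7 Θ x)
          - 15 * ((3 : ℝ) * (iteratedDeriv 5 Θ x)^(3-1) * iteratedDeriv 6 Θ x)) x :=
      ((h1.neg.add (h2.const_mul 10)).sub (h3.const_mul 15)).congr_of_eventuallyEq
        (Filter.Eventually.of_forall fun y => by simp only [Pi.neg_apply, Pi.add_apply, Pi.sub_apply]; ring)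
    have key := deriv_val_eq E5 hL hR
    linear_combination 7 * (iteratedDeriv 5 Θ x) * (E5 x) - (iteratedDeriv 4 Θ x) * key
  intro x
  have h4x := h4 x
  have f2 : iteratedDeriv 2 f (-(iteratedDeriv 3 Θ x)) = -1 / iteratedDeriv 4 Θ x := by
    rw [eq_div_iff h4x]; linear_combination E2 x
  have f3 : iteratedDeriv 3 f (-(iteratedDeriv 3 Θ x)) = -(iteratedDeriv 5 Θ x) / (iteratedDeriv 4 Θ x)^3 := by
    rw [eq_div_iff (pow_ne_zero 3 h4x)]; linear_combination E3 x
  have f4 : iteratedDeriv 4 f (-(iteratedDeriv 3 Θ x))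
      = (iteratedDeriv 4 Θ x * iteratedDeriv 6 Θ x - 3 * (iteratedDeriv 5 Θ x)^2) / (iteratedDeriv 4 Θ x)^5 := by
    rw [eq_div_iff (pow_ne_zero 5 h4x)]; linear_combination E4 x
  have f5 : iteratedDeriv 5 f (-(iteratedDeriv 3 Θ x))
      = (-((iteratedDeriv 4 Θ x)^2 * iteratedDeriv 7 Θ x)
          + 10 * iteratedDeriv 4 Θ x * iteratedDeriv 5 Θ x * iteratedDeriv 6 Θ x
          - 15 * (iteratedDeriv 5 Θ x)^3) / (iteratedDeriv 4 Θ x)^7 := by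
    rw [eq_div_iff (pow_ne_zero 7 h4x)]; linear_combination E5 x
  have f6 : iteratedDeriv 6 f (-(iteratedDeriv 3 Θ x))
      = ((iteratedDeriv 4 Θ x)^3 * iteratedDeriv 8 Θ x
          - 15 * (iteratedDeriv 4 Θ x)^2 * iteratedDeriv 5 Θ x * iteratedDeriv 7 Θ x
          - 10 * (iteratedDeriv 4 Θ x)^2 * (iteratedDeriv 6 Θ x)^2
          + 105 * iteratedDeriv 4 Θ x * (iteratedDeriv 5 Θ x)^2 * iteratedDeriv 6 Θ x
          - 105 * (iteratedDeriv 5 Θ x)^4) / (iteratedDeriv 4 Θ x)^9 := by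
    rw [eq_div_iff (pow_ne_zero 9 h4x)]; linear_combination E6 x
  simp only [a5, α5]
  rw [f2, f3, f4, f5, f6]
  field_simp
  ring
end

section
/- Suppose f and Θ are smooth, satisfy the constraint f(−Θ⁽³⁾(x)) + x·Θ⁽³⁾(x) − Θ''(x) = 0 for all x ∈ ℝ, that Θ⁽⁴⁾(x) ≠ 0 for all x ∈ ℝ, and that Θ satisfies the eighth-order ODE α₅[Θ](x) = 0 for all x ∈ ℝ. Then f satisfies the sixth-order ODE along the curve q = −Θ⁽³⁾(x): for all x ∈ ℝ, a₅[f](−Θ⁽³⁾(x)) = 0. -/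
private lemma derivs_eq {g h : ℝ → ℝ} {a b x : ℝ} (hg : HasDerivAt g a x)
    (hh : HasDerivAt h b x) (he : ∀ y, g y = h y) : a = b :=
  hg.unique (hh.congr_of_eventuallyEq (Filter.Eventually.of_forall he))

private lemma poly_step (I2 I3 I4 I5 I6 t4 t5 t6 t7 t8 : ℝ) (ht : t4 ≠ 0)
    (h2 : I2 * t4 = -1) (h3 : I3 * t4 ^ 3 = -t5)
    (h4 : I4 * t4 ^ 5 = t4 * t6 - 3 * t5 ^ 2)
    (h5 : I5 * t4 ^ 7 = 10 * t4 * t5 * t6 - t4 ^ 2 * t7 - 15 * t5 ^ 3)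
    (h6 : I6 * t4 ^ 9 = 105 * t4 * t5 ^ 2 * t6 - 10 * t4 ^ 2 * t6 ^ 2
      - 15 * t4 ^ 2 * t5 * t7 + t4 ^ 3 * t8 - 105 * t5 ^ 4)
    (hα : 10 * t4 ^ 3 * t8 - 70 * t4 ^ 2 * t5 * t7 - 49 * t4 ^ 2 * t6 ^ 2
      + 280 * t4 * t5 ^ 2 * t6 - 175 * t5 ^ 4 = 0) :
    10 * I6 * I2 ^ 3 - 80 * I2 ^ 2 * I3 * I5 - 51 * I2 ^ 2 * I4 ^ 2
      + 336 * I2 * I3 ^ 2 * I4 - 224 * I3 ^ 4 = 0 := by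
  have e2 : I2 = -1 / t4 := by rw [eq_div_iff ht]; exact h2
  have e3 : I3 = -t5 / t4 ^ 3 := by rw [eq_div_iff (pow_ne_zero 3 ht)]; exact h3
  have e4 : I4 = (t4 * t6 - 3 * t5 ^ 2) / t4 ^ 5 := by
    rw [eq_div_iff (pow_ne_zero 5 ht)]; exact h4
  have e5 : I5 = (10 * t4 * t5 * t6 - t4 ^ 2 * t7 - 15 * t5 ^ 3) / t4 ^ 7 := by
    rw [eq_div_iff (pow_ne_zero 7 ht)]; exact h5
  have e6 : I6 = (105 * t4 * t5 ^ 2 * t6 - 10 * t4 ^ 2 * t6 ^ 2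
      - 15 * t4 ^ 2 * t5 * t7 + t4 ^ 3 * t8 - 105 * t5 ^ 4) / t4 ^ 9 := by
    rw [eq_div_iff (pow_ne_zero 9 ht)]; exact h6
  subst e2 e3 e4 e5 e6
  field_simp
  linear_combination (-1) * hα

theorem stmt_7 (f Θ : ℝ → ℝ) (hf : ContDiff ℝ (⊤ : ℕ∞) f) (hΘ : ContDiff ℝ (⊤ : ℕ∞) Θ)
    (hcon : ∀ x : ℝ, f (-(iteratedDeriv 3 Θ x)) + x * iteratedDeriv 3 Θ x
      - iteratedDeriv 2 Θ x = 0)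
    (h4 : ∀ x : ℝ, iteratedDeriv 4 Θ x ≠ 0)
    (hα5 : ∀ x : ℝ, α5 Θ x = 0) :
    ∀ x : ℝ, a5 f (-(iteratedDeriv 3 Θ x)) = 0 := by
  -- derivative of iterated derivatives
  have hD : ∀ (n : ℕ) (y : ℝ),
      HasDerivAt (iteratedDeriv n Θ) (iteratedDeriv (n + 1) Θ y) y := by
    intro n y
    have h1 : DifferentiableAt ℝ (iteratedDeriv n Θ) y :=
      (hΘ.differentiable_iteratedDeriv n (by exact_mod_cast lt_top_iff_ne_top.2 (by simp))) y
    simpa [iteratedDeriv_succ] using h1.hasDerivAt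
  have hDf : ∀ (n : ℕ) (y : ℝ),
      HasDerivAt (iteratedDeriv n f) (iteratedDeriv (n + 1) f y) y := by
    intro n y
    have h1 : DifferentiableAt ℝ (iteratedDeriv n f) y :=
      (hf.differentiable_iteratedDeriv n (by exact_mod_cast lt_top_iff_ne_top.2 (by simp))) y
    simpa [iteratedDeriv_succ] using h1.hasDerivAt
  -- chain rule along φ = -Θ'''
  have hC : ∀ (k : ℕ) (y : ℝ),
      HasDerivAt (fun z => iteratedDeriv k f (-(iteratedDeriv 3 Θ z)))
        (iteratedDeriv (k + 1) f (-(iteratedDeriv 3 Θ y)) * -(iteratedDeriv 4 Θ y)) y := by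
    intro k y
    exact (hDf k _).comp y ((hD 3 y).neg)
  -- level 0
  have h0 : ∀ y : ℝ, f (-(iteratedDeriv 3 Θ y))
      = iteratedDeriv 2 Θ y - y * iteratedDeriv 3 Θ y := by
    intro y; linarith [hcon y]
  -- level 1 : f'(φ y) = y
  have h1 : ∀ y : ℝ, iteratedDeriv 1 f (-(iteratedDeriv 3 Θ y)) = y := by
    intro y
    have hL : HasDerivAt (fun z => f (-(iteratedDeriv 3 Θ z)))
        (iteratedDeriv 1 f (-(iteratedDeriv 3 Θ y)) * -(iteratedDeriv 4 Θ y)) y := by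
      simpa [iteratedDeriv_zero] using hC 0 y
    have hR : HasDerivAt (fun z => iteratedDeriv 2 Θ z - z * iteratedDeriv 3 Θ z)
        (iteratedDeriv 3 Θ y - (1 * iteratedDeriv 3 Θ y + y * iteratedDeriv 4 Θ y)) y :=
      (hD 2 y).sub ((hasDerivAt_id y).mul (hD 3 y))
    have A := derivs_eq hL hR h0
    have ht := h4 y
    have hy : iteratedDeriv 1 f (-(iteratedDeriv 3 Θ y)) * -(iteratedDeriv 4 Θ y)
        = y * -(iteratedDeriv 4 Θ y) := by linarith [A]
    exact mul_right_cancel₀ (neg_ne_zero.mpr ht) hy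
  -- level 2
  have h2 : ∀ y : ℝ,
      iteratedDeriv 2 f (-(iteratedDeriv 3 Θ y)) * iteratedDeriv 4 Θ y = -1 := by
    intro y
    have A := derivs_eq (hC 1 y) (hasDerivAt_id y) h1
    linarith [A]
  -- level 3
  have h3 : ∀ y : ℝ,
      iteratedDeriv 3 f (-(iteratedDeriv 3 Θ y)) * iteratedDeriv 4 Θ y ^ 3
        = -(iteratedDeriv 5 Θ y) := by
    intro y
    have A := derivs_eq ((hC 2 y).mul (hD 4 y)) (hasDerivAt_const y (-1 : ℝ)) h2
    linear_combination (-(iteratedDeriv 4 Θ y)) * A + iteratedDeriv 5 Θ y * h2 y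
  -- level 4
  have h4' : ∀ y : ℝ,
      iteratedDeriv 4 f (-(iteratedDeriv 3 Θ y)) * iteratedDeriv 4 Θ y ^ 5
        = iteratedDeriv 4 Θ y * iteratedDeriv 6 Θ y - 3 * iteratedDeriv 5 Θ y ^ 2 := by
    intro y
    have A := derivs_eq ((hC 3 y).mul ((hD 4 y).pow 3)) ((hD 5 y).neg) h3
    simp only [Pi.pow_apply, Pi.mul_apply] at A
    linear_combination (-(iteratedDeriv 4 Θ y)) * A + (3 * iteratedDeriv 5 Θ y) * h3 y
  -- level 5
  have h5 : ∀ y : ℝ,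
      iteratedDeriv 5 f (-(iteratedDeriv 3 Θ y)) * iteratedDeriv 4 Θ y ^ 7
        = 10 * iteratedDeriv 4 Θ y * iteratedDeriv 5 Θ y * iteratedDeriv 6 Θ y
          - iteratedDeriv 4 Θ y ^ 2 * iteratedDeriv 7 Θ y
          - 15 * iteratedDeriv 5 Θ y ^ 3 := by
    intro y
    have A := derivs_eq ((hC 4 y).mul ((hD 4 y).pow 5))
      (((hD 4 y).mul (hD 6 y)).sub (HasDerivAt.const_mul (3 : ℝ) ((hD 5 y).pow 2))) h4'
    simp only [Pi.pow_apply, Pi.mul_apply] at A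
    linear_combination (-(iteratedDeriv 4 Θ y)) * A + (5 * iteratedDeriv 5 Θ y) * h4' y
  -- level 6
  have h6 : ∀ y : ℝ,
      iteratedDeriv 6 f (-(iteratedDeriv 3 Θ y)) * iteratedDeriv 4 Θ y ^ 9
        = 105 * iteratedDeriv 4 Θ y * iteratedDeriv 5 Θ y ^ 2 * iteratedDeriv 6 Θ y
          - 10 * iteratedDeriv 4 Θ y ^ 2 * iteratedDeriv 6 Θ y ^ 2
          - 15 * iteratedDeriv 4 Θ y ^ 2 * iteratedDeriv 5 Θ y * iteratedDeriv 7 Θ y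
          + iteratedDeriv 4 Θ y ^ 3 * iteratedDeriv 8 Θ y
          - 105 * iteratedDeriv 5 Θ y ^ 4 := by
    intro y
    have A := derivs_eq ((hC 5 y).mul ((hD 4 y).pow 7))
      (((((HasDerivAt.const_mul (10 : ℝ) (hD 4 y)).mul (hD 5 y)).mul (hD 6 y)).sub
          (((hD 4 y).pow 2).mul (hD 7 y))).sub
        (HasDerivAt.const_mul (15 : ℝ) ((hD 5 y).pow 3))) h5
    simp only [Pi.pow_apply, Pi.mul_apply] at A
    linear_combination (-(iteratedDeriv 4 Θ y)) * A + (7 * iteratedDeriv 5 Θ y) * h5 y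
  -- conclude
  intro x
  have hα := hα5 x
  simp only [α5] at hα
  simp only [a5]
  exact poly_step _ _ _ _ _ _ _ _ _ _ (h4 x) (h2 x) (h3 x) (h4' x) (h5 x) (h6 x) hα
end

section
/- Let f : ℝ → ℝ be smooth and consider on ℝ⁵ with coordinates (x, y, p, q, z) the smooth vector fields X₄ = ∂_q and X₅ = ∂_x + p·∂_y + q·∂_p + f(q)·∂_z. Set X₃ = [X₄, X₅], X₂ = [X₄, X₃] = [X₄,[X₄,X₅]] and X₁ = [X₅, X₃] = [X₅,[X₄,X₅]], where [·,·] denotes the Lie bracket of vector fields. Then at a point m = (x, y, p, q, z) ∈ ℝ⁵, the five vectors X₁(m), X₂(m), X₃(m), X₄(m), X₅(m) form a basis of ℝ⁵ (i.e., are linearly independent) if and only if f''(q) ≠ 0. -/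
/-- A vector field on ℝ⁵ is a (smooth) map ℝ⁵ → ℝ⁵; its Lie bracket:
`[V, W](m) = DW(m)(V(m)) − DV(m)(W(m))`. -/
noncomputable def lieBracketVF (V W : (Fin 5 → ℝ) → (Fin 5 → ℝ)) :
    (Fin 5 → ℝ) → (Fin 5 → ℝ) :=
  fun m => fderiv ℝ W m (V m) - fderiv ℝ V m (W m)

/-- `X₄ = ∂_q`, in coordinates `(x, y, p, q, z)` on ℝ⁵. -/
noncomputable def X4 : (Fin 5 → ℝ) → (Fin 5 → ℝ) := fun _ => ![0, 0, 0, 1, 0]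

/-- `X₅ = ∂_x + p·∂_y + q·∂_p + f(q)·∂_z`, in coordinates `(x, y, p, q, z)` on ℝ⁵. -/
noncomputable def X5 (f : ℝ → ℝ) : (Fin 5 → ℝ) → (Fin 5 → ℝ) :=
  fun m => ![1, m 2, m 3, 0, f (m 3)]

open ContinuousLinearMap

noncomputable def L5 (c : ℝ) : (Fin 5 → ℝ) →L[ℝ] (Fin 5 → ℝ) :=
  ContinuousLinearMap.pi ![0, proj 2, proj 3, 0, c • proj 3]

noncomputable def L3 (c : ℝ) : (Fin 5 → ℝ) →L[ℝ] (Fin 5 → ℝ) :=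
  ContinuousLinearMap.pi ![0, 0, 0, 0, c • proj 3]

lemma hasFDerivX5 (f : ℝ → ℝ) (hf : Differentiable ℝ f) (m : Fin 5 → ℝ) :
    HasFDerivAt (X5 f) (L5 (deriv f (m 3))) m := by
  rw [hasFDerivAt_pi']
  intro i
  fin_cases i <;>
    simp only [X5, L5, ContinuousLinearMap.proj_pi, Matrix.cons_val_zero, Matrix.cons_val_one,
      Matrix.head_cons, Matrix.cons_val_two, Matrix.tail_cons, Matrix.cons_val_three,
      Matrix.cons_val_four, Fin.isValue]
  · exact hasFDerivAt_const 1 m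
  · exact hasFDerivAt_apply 2 m
  · exact hasFDerivAt_apply 3 m
  · exact hasFDerivAt_const 0 m
  · exact ((hf.differentiableAt.hasDerivAt).comp_hasFDerivAt m (hasFDerivAt_apply 3 m))

lemma hasFDerivX3 (g : ℝ → ℝ) (hg : Differentiable ℝ g) (m : Fin 5 → ℝ) :
    HasFDerivAt (fun m : Fin 5 → ℝ => ![(0:ℝ), 0, 1, 0, g (m 3)]) (L3 (deriv g (m 3))) m := by
  rw [hasFDerivAt_pi']
  intro i
  fin_cases i <;>
    simp only [L3, ContinuousLinearMap.proj_pi, Matrix.cons_val_zero, Matrix.cons_val_one,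
      Matrix.head_cons, Matrix.cons_val_two, Matrix.tail_cons, Matrix.cons_val_three,
      Matrix.cons_val_four, Fin.isValue]
  · exact hasFDerivAt_const 0 m
  · exact hasFDerivAt_const 0 m
  · exact hasFDerivAt_const 1 m
  · exact hasFDerivAt_const 0 m
  · exact ((hg.differentiableAt.hasDerivAt).comp_hasFDerivAt m (hasFDerivAt_apply 3 m))

lemma L5_apply (c : ℝ) (v : Fin 5 → ℝ) : L5 c v = ![0, v 2, v 3, 0, c * v 3] := by
  funext i; fin_cases i <;> simp [L5]

lemma L3_apply (c : ℝ) (v : Fin 5 → ℝ) : L3 c v = ![0, 0, 0, 0, c * v 3] := by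
  funext i; fin_cases i <;> simp [L3]

theorem stmt_9 (f : ℝ → ℝ) (hf : ContDiff ℝ (⊤ : ℕ∞) f)
    (X3 X2 X1 : (Fin 5 → ℝ) → (Fin 5 → ℝ))
    (hX3 : X3 = lieBracketVF X4 (X5 f))
    (hX2 : X2 = lieBracketVF X4 X3)
    (hX1 : X1 = lieBracketVF (X5 f) X3) :
    ∀ m : Fin 5 → ℝ,
      LinearIndependent ℝ ![X1 m, X2 m, X3 m, X4 m, X5 f m]
        ↔ iteratedDeriv 2 f (m 3) ≠ 0 := by
  have hf' : ContDiff ℝ (↑(⊤:ℕ∞)) f := hf.of_le (by simp)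
  have hfd : Differentiable ℝ f := hf.differentiable (by simp)
  have hfd' : Differentiable ℝ (deriv f) :=
    ((contDiff_infty_iff_deriv.1 hf').2).differentiable (by simp)
  have hX3' : X3 = fun m => ![(0:ℝ), 0, 1, 0, deriv f (m 3)] := by
    rw [hX3]; funext m
    rw [lieBracketVF, (hasFDerivX5 f hfd m).fderiv,
      show X4 = fun _ : Fin 5 → ℝ => ![(0:ℝ),0,0,1,0] from rfl, fderiv_fun_const]
    simp [X4, L5_apply]
  have hX2' : ∀ m, X2 m = ![(0:ℝ), 0, 0, 0, deriv (deriv f) (m 3)] := by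
    intro m
    rw [hX2, lieBracketVF, hX3', (hasFDerivX3 (deriv f) hfd' m).fderiv]
    rw [show X4 = fun _ : Fin 5 → ℝ => ![(0:ℝ),0,0,1,0] from rfl, fderiv_fun_const]
    simp [X4, L3_apply]
  have hX1' : ∀ m, X1 m = ![(0:ℝ), -1, 0, 0, 0] := by
    intro m
    rw [hX1, lieBracketVF, hX3', (hasFDerivX3 (deriv f) hfd' m).fderiv,
      (hasFDerivX5 f hfd m).fderiv]
    funext i
    fin_cases i <;> simp [X5, L3_apply, L5_apply]
  intro m
  rw [hX1' m, hX2' m, hX3']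
  rw [show iteratedDeriv 2 f (m 3) = deriv (deriv f) (m 3) by
    simp [iteratedDeriv_succ, iteratedDeriv_one]]
  set c := deriv (deriv f) (m 3) with hc
  set b := deriv f (m 3)
  have key : LinearIndependent ℝ
      (fun i => (Matrix.of ![![(0:ℝ), -1, 0, 0, 0], ![0,0,0,0,c], ![0,0,1,0,b],
        X4 m, X5 f m]) i) ↔ c ≠ 0 := by
    change LinearIndependent ℝ (Matrix.row (Matrix.of ![![(0:ℝ), -1, 0, 0, 0], ![0,0,0,0,c], ![0,0,1,0,b],
      X4 m, X5 f m])) ↔ c ≠ 0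
    rw [Matrix.linearIndependent_rows_iff_isUnit, Matrix.isUnit_iff_isUnit_det,
      isUnit_iff_ne_zero]
    have : (Matrix.of ![![(0:ℝ), -1, 0, 0, 0], ![0,0,0,0,c], ![0,0,1,0,b],
        X4 m, X5 f m]).det = -c := by
      simp [X4, X5, Matrix.det_succ_row_zero, Fin.sum_univ_succ]
      simp [Fin.succAbove, Fin.lt_def]
      ring
    rw [this]
    simp
  exact key
end
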